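/- arXiv:1505.01704 — 3 statements merged into one kernel-verified Lean document; each statement's English description precedes it below -/
import Mathlib

section
/- Let 0 ≤ α₁ ≤ … ≤ α_h < 1 and 0 ≤ β₁ ≤ … ≤ β_h < 1 be reals with α_i ≠ β_j for all i,j, and define ρ(k) = #{j : α_j < β_k} − k. Then ρ is constant (i.e., ρ(k) = ρ(1) for all k) if and only if the numbers interlace, i.e., either α₁ < β₁ < α₂ < β₂ < … < α_h < β_h or β₁ < α₁ < β₂ < α₂ < … < β_h < α_h. -/
lemma lower_mem_iff {h : ℕ} (S : Finset (Fin h))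
    (hS : ∀ i j : Fin h, i ≤ j → j ∈ S → i ∈ S) (j : Fin h) :
    j ∈ S ↔ (j : ℕ) < S.card := by
  constructor
  · intro hj
    have hsub : Finset.Iic j ⊆ S := fun i hi => hS i j (Finset.mem_Iic.mp hi) hj
    have hc := Finset.card_le_card hsub
    rw [Fin.card_Iic] at hc
    omega
  · intro hj
    by_contra hjS
    have hsub : S ⊆ Finset.Iio j := by
      intro i hi
      rw [Finset.mem_Iio]
      by_contra hij
      exact hjS (hS j i (le_of_not_gt hij) hi)
    have hc := Finset.card_le_card hsub
    rw [Fin.card_Iio] at hc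
    omega

lemma nat_eq_of_iff {h m n : ℕ} (hm : m ≤ h) (hn : n ≤ h)
    (H : ∀ j : Fin h, (j : ℕ) < m ↔ (j : ℕ) < n) : m = n := by
  by_contra hne
  rcases Nat.lt_or_ge m n with hlt | hge
  · have := (H ⟨m, lt_of_lt_of_le hlt hn⟩).mpr hlt
    simp at this
  · have hlt : n < m := lt_of_le_of_ne hge (Ne.symm hne)
    have := (H ⟨n, lt_of_lt_of_le hlt hm⟩).mp hlt
    simp at this

theorem stmt2 (h : ℕ) (hh : 0 < h) (α β : Fin h → ℝ)
    (hα : Monotone α) (hβ : Monotone β)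
    (hα0 : ∀ i, 0 ≤ α i) (hα1 : ∀ i, α i < 1)
    (hβ0 : ∀ i, 0 ≤ β i) (hβ1 : ∀ i, β i < 1)
    (hne : ∀ i j, α i ≠ β j)
    (ρ : Fin h → ℤ)
    (hρ : ∀ k, ρ k = ((Finset.univ.filter fun j => α j < β k).card : ℤ) - ((k : ℕ) + 1)) :
    (∀ k : Fin h, ρ k = ρ ⟨0, hh⟩) ↔
      (((∀ k : Fin h, α k < β k) ∧
          ∀ k : Fin h, ∀ hk : (k : ℕ) + 1 < h, β k < α ⟨(k : ℕ) + 1, hk⟩) ∨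
        ((∀ k : Fin h, β k < α k) ∧
          ∀ k : Fin h, ∀ hk : (k : ℕ) + 1 < h, α k < β ⟨(k : ℕ) + 1, hk⟩)) := by
  set N : Fin h → ℕ := fun k => (Finset.univ.filter fun j => α j < β k).card with hNdef
  have key : ∀ k j : Fin h, α j < β k ↔ (j : ℕ) < N k := by
    intro k j
    have := lower_mem_iff (Finset.univ.filter fun j => α j < β k)
      (by
        intro i j hij hj
        simp only [Finset.mem_filter, Finset.mem_univ, true_and] at *
        exact lt_of_le_of_lt (hα hij) hj) j
    simpa [hNdef] using this
  have Nle : ∀ k, N k ≤ h := by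
    intro k
    have := Finset.card_le_card (Finset.filter_subset (fun j => α j < β k) Finset.univ)
    simpa [hNdef] using this
  have hρ' : ∀ k, ρ k = (N k : ℤ) - ((k : ℕ) + 1) := hρ
  constructor
  · intro hconst
    set z : Fin h := ⟨0, hh⟩ with hz
    set last : Fin h := ⟨h - 1, by omega⟩ with hlast
    have hNk : ∀ k : Fin h, (N k : ℤ) = (k : ℕ) + (N z : ℤ) := by
      intro k
      have := hconst k
      rw [hρ' k, hρ' z] at this
      simp only [hz] at this ⊢
      push_cast at this ⊢
      omega
    have hmle : N z ≤ 1 := by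
      have h1 := hNk last
      have h2 := Nle last
      have hl : (last : ℕ) = h - 1 := rfl
      rw [hl] at h1
      omega
    rcases Nat.lt_or_ge (N z) 1 with hm | hm
    · -- N z = 0, so N k = k : β-first interlacing
      have hNkn : ∀ k : Fin h, N k = (k : ℕ) := by
        intro k; have := hNk k; omega
      right
      constructor
      · intro k
        have : ¬ α k < β k := by
          rw [key k k, hNkn k]; omega
        exact lt_of_le_of_ne (le_of_not_gt this) (hne k k).symm
      · intro k hk
        rw [key ⟨(k : ℕ) + 1, hk⟩ k, hNkn]
        simp
    · -- N z = 1, so N k = k + 1 : α-first interlacing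
      have hNkn : ∀ k : Fin h, N k = (k : ℕ) + 1 := by
        intro k; have := hNk k; omega
      left
      constructor
      · intro k
        rw [key k k, hNkn k]; omega
      · intro k hk
        have : ¬ α ⟨(k : ℕ) + 1, hk⟩ < β k := by
          rw [key k ⟨(k : ℕ) + 1, hk⟩, hNkn k]
          simp
        exact lt_of_le_of_ne (le_of_not_gt this) (hne _ k).symm
  · rintro (⟨h1, h2⟩ | ⟨h1, h2⟩) k
    · -- α-first: N k = k + 1, ρ ≡ 0
      have hNkn : ∀ k : Fin h, N k = (k : ℕ) + 1 := by
        intro k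
        refine nat_eq_of_iff (Nle k) (by omega) ?_
        intro j
        rw [← key k j]
        constructor
        · intro hj
          by_contra hjk
          push_neg at hjk
          have hkh : (k : ℕ) + 1 < h := lt_of_le_of_lt hjk j.isLt
          have : β k < α j := lt_of_lt_of_le (h2 k hkh) (hα (by exact hjk))
          exact absurd hj (asymm this)
        · intro hj
          have : (j : ℕ) ≤ (k : ℕ) := by omega
          exact lt_of_le_of_lt (hα this) (h1 k)
      rw [hρ' k, hρ' ⟨0, hh⟩, hNkn k, hNkn ⟨0, hh⟩]
      push_cast
      ring
    · -- β-first: N k = k, ρ ≡ -1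
      have hNkn : ∀ k : Fin h, N k = (k : ℕ) := by
        intro k
        refine nat_eq_of_iff (Nle k) (le_of_lt k.isLt) ?_
        intro j
        rw [← key k j]
        constructor
        · intro hj
          by_contra hjk
          push_neg at hjk
          have : β k < α j := lt_of_lt_of_le (h1 k) (hα hjk)
          exact absurd hj (asymm this)
        · intro hj
          have hjh : (j : ℕ) + 1 < h := lt_of_le_of_lt hj k.isLt
          calc α j < β ⟨(j : ℕ) + 1, hjh⟩ := h2 j hjh
            _ ≤ β k := hβ (by exact hj)
      rw [hρ' k, hρ' ⟨0, hh⟩, hNkn k, hNkn ⟨0, hh⟩]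
      push_cast
      ring
end

section
/- Let 0 ≤ α₁ ≤ … ≤ α_h < 1 and 0 ≤ β₁ ≤ … ≤ β_h < 1 with α_i ≠ β_j for all i,j, and ρ(k) = #{j : α_j < β_k} − k. If ρ is constant then its constant value is either 0 or −1. -/
theorem stmt3 (h : ℕ) (hh : 0 < h) (α β : Fin h → ℝ)
    (hα : Monotone α) (hβ : Monotone β)
    (hα0 : ∀ i, 0 ≤ α i) (hα1 : ∀ i, α i < 1)
    (hβ0 : ∀ i, 0 ≤ β i) (hβ1 : ∀ i, β i < 1)
    (hne : ∀ i j, α i ≠ β j)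
    (ρ : Fin h → ℤ)
    (hρ : ∀ k, ρ k = ((Finset.univ.filter fun j => α j < β k).card : ℤ) - ((k : ℕ) + 1))
    (hconst : ∀ k l : Fin h, ρ k = ρ l) :
    (∀ k : Fin h, ρ k = 0) ∨ (∀ k : Fin h, ρ k = -1) := by
  set k0 : Fin h := ⟨0, hh⟩ with hk0
  set kl : Fin h := ⟨h - 1, Nat.sub_lt hh one_pos⟩ with hkl
  have hlow : -1 ≤ ρ k0 := by
    rw [hρ k0]
    have : (0 : ℤ) ≤ ((Finset.univ.filter fun j => α j < β k0).card : ℤ) :=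
      Int.ofNat_nonneg _
    simp only [hk0]
    omega
  have hcard : (Finset.univ.filter fun j => α j < β kl).card ≤ h := by
    calc (Finset.univ.filter fun j => α j < β kl).card
        ≤ (Finset.univ : Finset (Fin h)).card := Finset.card_filter_le _ _
      _ = h := by simp
  have hup : ρ kl ≤ 0 := by
    rw [hρ kl]
    have hv : ((kl : ℕ) : ℤ) + 1 = (h : ℤ) := by
      simp only [hkl]
      omega
    omega
  have heq : ρ k0 = ρ kl := hconst k0 kl
  have : ρ k0 = 0 ∨ ρ k0 = -1 := by omega
  rcases this with h0 | h1
  · exact Or.inl fun k => (hconst k k0).trans h0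
  · exact Or.inr fun k => (hconst k k0).trans h1
end

section
/- Let V be a finite-dimensional vector space over a field and N : V → V a nilpotent endomorphism. Then there exists at most one increasing filtration W^• V indexed by ℤ such that N(W^k) ⊆ W^{k−2} for all k and for all k > 0 the map N^k induces an isomorphism gr_W^k V ≅ gr_W^{−k} V. -/
/-- `W` is a monodromy weight filtration (centered at 0) for the nilpotent
endomorphism `N`: an increasing exhaustive and separated ℤ-indexed filtration with
`N (W k) ⊆ W (k-2)` such that for every `k > 0` the map induced by `N^k` from
`gr^k = W k / W (k-1)` to `gr^{-k} = W (-k) / W (-k-1)` is bijective (expressed below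
without mentioning quotients: injectivity and surjectivity of the induced map). -/
def IsWeightFiltration {K V : Type*} [Field K] [AddCommGroup V] [Module K V]
    (N : V →ₗ[K] V) (W : ℤ → Submodule K V) : Prop :=
  Monotone W ∧ (∃ a : ℤ, W a = ⊥) ∧ (∃ b : ℤ, W b = ⊤) ∧
    (∀ k : ℤ, Submodule.map N (W k) ≤ W (k - 2)) ∧
    (∀ k : ℤ, 0 < k → ∀ x ∈ W k, (N ^ k.toNat) x ∈ W (-k - 1) → x ∈ W (k - 1)) ∧
    (∀ k : ℤ, 0 < k → ∀ y ∈ W (-k), ∃ x ∈ W k, y - (N ^ k.toNat) x ∈ W (-k - 1))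

section Aux

variable {K V : Type*} [Field K] [AddCommGroup V] [Module K V]

private lemma memo {W : ℤ → Submodule K V} {i j : ℤ} (h : i = j) {x : V}
    (hx : x ∈ W i) : x ∈ W j := h ▸ hx

/-- Iterating the shift axiom. -/
private lemma iterN (N : V →ₗ[K] V) (W : ℤ → Submodule K V)
    (h4 : ∀ k : ℤ, Submodule.map N (W k) ≤ W (k - 2)) :
    ∀ (j : ℕ) (k : ℤ) (x : V), x ∈ W k → (N ^ j) x ∈ W (k - 2 * j) := by
  intro j
  induction j with
  | zero => intro k x hx; simpa using hx
  | succ n ih =>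
    intro k x hx
    have h1 : (N ^ n) x ∈ W (k - 2 * n) := ih k x hx
    have h2 : N ((N ^ n) x) ∈ W (k - 2 * n - 2) := h4 _ ⟨_, h1, rfl⟩
    have h3 : (N ^ (n + 1)) x = N ((N ^ n) x) := by
      rw [pow_succ']; rfl
    rw [h3]
    exact memo (by push_cast; ring) h2

/-- Negative far-out pieces are zero. -/
private lemma botlem (N : V →ₗ[K] V) (W : ℤ → Submodule K V)
    (hW : IsWeightFiltration N W) (m : ℕ) (hm : N ^ m = 0) :
    ∀ t : ℤ, (m : ℤ) ≤ t → 1 ≤ t → W (-t) = ⊥ := by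
  obtain ⟨mono, ⟨a, ha⟩, -, -, -, surj⟩ := hW
  intro t htm ht1
  rw [eq_bot_iff]
  intro y hy
  have key : ∀ n : ℕ, y ∈ W (-(t + n)) := by
    intro n
    induction n with
    | zero => exact memo (by push_cast; ring) hy
    | succ n ih =>
      have hpos : (0 : ℤ) < t + n := by omega
      obtain ⟨x, hx, hsub⟩ := surj (t + n) hpos y (memo (by ring) ih)
      have hz : N ^ (t + (n : ℤ)).toNat = 0 := by
        obtain ⟨c, hc⟩ : ∃ c : ℕ, (t + (n : ℤ)).toNat = m + c := ⟨(t + n).toNat - m, by omega⟩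
        rw [hc, pow_add, hm, zero_mul]
      rw [hz] at hsub
      simp only [LinearMap.zero_apply, sub_zero] at hsub
      exact memo (by push_cast; ring) hsub
  have hy' : y ∈ W a := by
    rcases le_or_gt a (-t) with hle | hlt
    · have : y ∈ W (-(t + (-a - t).toNat)) := key _
      exact mono (by omega) this
    · exact mono (by omega) (key 0)
  rw [ha] at hy'
  exact hy'

/-- Lemma A: pushing down, using injectivity of `W'` and the negative-side inclusion. -/
private lemma lemA (N : V →ₗ[K] V) (W W' : ℤ → Submodule K V)
    (hW : IsWeightFiltration N W) (hW' : IsWeightFiltration N W')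
    (T M : ℤ) (hT : 1 ≤ T) (hM : T - 1 ≤ M)
    (Hyp : ∀ s : ℤ, T ≤ s → W (-s) ≤ W' (-s)) :
    ∀ k : ℤ, k ≤ M → ∀ x ∈ W k, x ∈ W' M := by
  intro k hkM x hx
  obtain ⟨b, hb⟩ := hW'.2.2.1
  have hxb : x ∈ W' b := by rw [hb]; exact Submodule.mem_top
  have key : ∀ n : ℕ, ∀ l : ℤ, l ≤ M + n → x ∈ W' l → x ∈ W' M := by
    intro n
    induction n with
    | zero => intro l hl hxl; exact hW'.1 (by omega) hxl
    | succ n ih =>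
      intro l hl hxl
      rcases le_or_gt l (M + n) with hle | hlt
      · exact ih l hle hxl
      · -- l > M, so l > k, l ≥ T, l ≥ 1
        have hlM : M < l := by omega
        have hl1 : (0 : ℤ) < l := by omega
        have hcast : ((l.toNat : ℤ)) = l := Int.toNat_of_nonneg (le_of_lt hl1)
        have hNx : (N ^ l.toNat) x ∈ W (k - 2 * (l.toNat : ℤ)) :=
          iterN N W hW.2.2.2.1 l.toNat k x hx
        have hNx2 : (N ^ l.toNat) x ∈ W (-(l + 1)) := hW.1 (by omega) hNx
        have hNx3 : (N ^ l.toNat) x ∈ W' (-l - 1) :=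
          memo (by ring) (Hyp (l + 1) (by omega) hNx2)
        have hstep : x ∈ W' (l - 1) := hW'.2.2.2.2.1 l hl1 x hxl hNx3
        exact ih (l - 1) (by omega) hstep
  exact key (b - M).toNat b (by omega) hxb

/-- Lemma B: surjectivity step extends negative-side inclusion one step inward. -/
private lemma lemB (N : V →ₗ[K] V) (W W' : ℤ → Submodule K V)
    (hW : IsWeightFiltration N W) (hW' : IsWeightFiltration N W')
    (s : ℤ) (hs : 1 ≤ s)
    (Hyp : ∀ t : ℤ, s + 1 ≤ t → W (-t) ≤ W' (-t)) :
    W (-s) ≤ W' (-s) := by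
  intro y hy
  obtain ⟨x, hx, hsub⟩ := hW.2.2.2.2.2 s (by omega) y hy
  have hx' : x ∈ W' s :=
    lemA N W W' hW hW' (s + 1) s (by omega) (by omega)
      (fun u hu => Hyp u hu) s le_rfl x hx
  have hNx : (N ^ s.toNat) x ∈ W' (s - 2 * (s.toNat : ℤ)) :=
    iterN N W' hW'.2.2.2.1 s.toNat s x hx'
  have hNx' : (N ^ s.toNat) x ∈ W' (-s) := memo (by omega) hNx
  have hsub' : y - (N ^ s.toNat) x ∈ W' (-s) := by
    have h1 : y - (N ^ s.toNat) x ∈ W (-(s + 1)) := memo (by ring) hsub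
    exact hW'.1 (by omega) (Hyp (s + 1) le_rfl h1)
  have := Submodule.add_mem _ hsub' hNx'
  simpa using this

/-- Equality on negative indices, by downward induction. -/
private lemma lemE (N : V →ₗ[K] V) (W W' : ℤ → Submodule K V)
    (hW : IsWeightFiltration N W) (hW' : IsWeightFiltration N W')
    (m : ℕ) (hm : N ^ m = 0) :
    ∀ d : ℕ, ∀ t : ℤ, (m : ℤ) - d ≤ t → 1 ≤ t → W (-t) = W' (-t) := by
  intro d
  induction d with
  | zero =>
    intro t h1 h2
    rw [botlem N W hW m hm t (by omega) h2, botlem N W' hW' m hm t (by omega) h2]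
  | succ d ih =>
    intro t ht h1
    rcases le_or_gt ((m : ℤ) - d) t with hc | hc
    · exact ih t hc h1
    · have Hyp : ∀ u : ℤ, t + 1 ≤ u → W (-u) = W' (-u) := by
        intro u hu
        exact ih u (by omega) (by omega)
      apply le_antisymm
      · exact lemB N W W' hW hW' t h1 (fun u hu => (Hyp u hu).le)
      · exact lemB N W' W hW' hW t h1 (fun u hu => (Hyp u hu).ge)

end Aux

theorem stmt11 {K V : Type*} [Field K] [AddCommGroup V] [Module K V]
    [FiniteDimensional K V] (N : V →ₗ[K] V) (hN : ∃ m : ℕ, N ^ m = 0)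
    (W W' : ℤ → Submodule K V)
    (hW : IsWeightFiltration N W) (hW' : IsWeightFiltration N W') :
    W = W' := by
  obtain ⟨m0, hm0⟩ := hN
  have hm : N ^ (m0 + 1) = 0 := by rw [pow_succ', hm0, mul_zero]
  have E1 : ∀ t : ℤ, 1 ≤ t → W (-t) = W' (-t) := by
    intro t h1
    exact lemE N W W' hW hW' (m0 + 1) hm (m0 + 1) t (by push_cast; omega) h1
  funext k
  rcases lt_or_ge k 0 with hk | hk
  · have h := E1 (-k) (by omega)
    simpa using h
  · apply le_antisymm
    · exact fun x hx =>
        lemA N W W' hW hW' 1 k le_rfl (by omega) (fun s hs => (E1 s hs).le) k le_rfl x hx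
    · exact fun x hx =>
        lemA N W' W hW' hW 1 k le_rfl (by omega) (fun s hs => (E1 s hs).ge) k le_rfl x hx
end
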